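/- arXiv:1611.09539 — 2 statements merged into one kernel-verified Lean document; each statement's English description precedes it below -/
import Mathlib

section
/- Let f : ℂ × ℂ → ℂ be entire, i.e. analytic on all of ℂ². If the set {(s,t) ∈ ℝ × ℝ : f(s,t) = 0} of real zeros of f has positive two-dimensional Lebesgue measure, then f is identically zero on ℂ². -/
open MeasureTheory Set Topology

/-!
A non-null set of reals is uncountable, and an uncountable closed set in a second countable space
contains a nonempty perfect set (Cantor–Bendixson), hence an accumulation point. So by the identity
theorem an entire function of one variable vanishing on a non-null set of reals vanishes identically.
For `f` on `ℂ²`, Fubini gives a non-null set of `s` for which `t ↦ f (s, t)` vanishes on a non-null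
set of reals, hence everywhere; then for each `w`, `z ↦ f (z, w)` vanishes on that set of `s`.
-/

theorem AnalyticOnNhd.eq_zero_of_not_countable_setOf_eq_zero {𝕜 E : Type*}
    [NontriviallyNormedField 𝕜] [SecondCountableTopology 𝕜] [PreconnectedSpace 𝕜]
    [NormedAddCommGroup E] [NormedSpace 𝕜 E] [CompleteSpace E] {g : 𝕜 → E}
    (hg : AnalyticOnNhd 𝕜 g univ) (hzeros : ¬ {z | g z = 0}.Countable) : g = 0 := by
  obtain ⟨D, hD, ⟨z₀, hz₀⟩, hDzeros⟩ := exists_perfect_nonempty_of_isClosed_of_not_countable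
    (isClosed_eq hg.continuous continuous_const) hzeros
  have hacc : ∃ᶠ z in 𝓝[≠] z₀, g z = 0 :=
    accPt_iff_frequently_nhdsNE.1 ((hD.acc z₀ hz₀).mono (Filter.principal_mono.2 hDzeros))
  exact eqOn_univ _ _ |>.1 <|
    hg.eqOn_zero_of_preconnected_of_frequently_eq_zero isPreconnected_univ (mem_univ z₀) hacc

theorem AnalyticOnNhd.eq_zero_of_volume_real_zeros_ne_zero {E : Type*}
    [NormedAddCommGroup E] [NormedSpace ℂ E] [CompleteSpace E] {g : ℂ → E}
    (hg : AnalyticOnNhd ℂ g univ) (hzeros : volume {x : ℝ | g x = 0} ≠ 0) : g = 0 :=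
  hg.eq_zero_of_not_countable_setOf_eq_zero fun hcount ↦
    hzeros ((hcount.preimage Complex.ofReal_injective).measure_zero volume)

theorem MeasureTheory.Measure.measure_setOf_measure_prodMk_preimage_ne_zero
    {α β : Type*} [MeasurableSpace α] [MeasurableSpace β] {μ : Measure α} {ν : Measure β}
    [SFinite ν] {s : Set (α × β)} (hs : MeasurableSet s) (hprod : μ.prod ν s ≠ 0) :
    μ {x | ν (Prod.mk x ⁻¹' s) ≠ 0} ≠ 0 := by
  rwa [Ne, Measure.measure_prod_null hs, Filter.EventuallyEq, ae_iff] at hprod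

/-- If an entire function `f : ℂ × ℂ → ℂ` is such that its set of real zeros
`{(s,t) ∈ ℝ × ℝ : f (s,t) = 0}` has positive two-dimensional Lebesgue measure,
then `f` is identically zero on `ℂ²`. -/
theorem entire_eq_zero_of_real_zeros_pos_measure
    (f : ℂ × ℂ → ℂ) (hf : AnalyticOnNhd ℂ f Set.univ)
    (h : 0 < volume {p : ℝ × ℝ | f ((p.1 : ℂ), (p.2 : ℂ)) = 0}) :
    ∀ z : ℂ × ℂ, f z = 0 := by
  have hmeas : MeasurableSet {p : ℝ × ℝ | f ((p.1 : ℂ), (p.2 : ℂ)) = 0} :=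
    (isClosed_eq (hf.continuous.comp (by fun_prop)) continuous_const).measurableSet
  have hrows : volume {s : ℝ | volume {t : ℝ | f (s, t) = 0} ≠ 0} ≠ 0 :=
    Measure.measure_setOf_measure_prodMk_preimage_ne_zero hmeas h.ne'
  have hrow_zero : ∀ s : ℝ, volume {t : ℝ | f (s, t) = 0} ≠ 0 → ∀ w, f (s, w) = 0 := fun s hs ↦
    congrFun ((hf.comp (analyticOnNhd_const.prod analyticOnNhd_id) (mapsTo_univ _ _))
      |>.eq_zero_of_volume_real_zeros_ne_zero hs)
  rintro ⟨z, w⟩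
  have hcol : AnalyticOnNhd ℂ (fun z ↦ f (z, w)) univ :=
    hf.comp (analyticOnNhd_id.prod analyticOnNhd_const) (mapsTo_univ _ _)
  refine congrFun (hcol.eq_zero_of_volume_real_zeros_ne_zero fun hnull ↦ hrows ?_) z
  exact measure_mono_null (fun s hs ↦ hrow_zero s hs w) hnull
end

section
/- Let n ∈ {2,3} and let E be a Borel subset of ℝ^{n-1}. If E has (n−1)-dimensional Lebesgue measure zero, or if E is (−1/2)-null, then E is 1/2-null, i.e. the only u ∈ H^{1/2}(ℝ^{n-1}) with supp(u) ⊂ E is u = 0. -/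
noncomputable section

open MeasureTheory SchwartzMap Complex Filter

attribute [local instance] Classical.propDecidable

/-- Euclidean space `ℝ^m`. -/
abbrev Euc (m : ℕ) : Type := EuclideanSpace ℝ (Fin m)

/-- Tempered distributions on `ℝ^m` (continuous linear functionals on Schwartz space). -/
abbrev TD (m : ℕ) : Type := SchwartzMap (Euc m) ℂ →L[ℝ] ℂ

/-- The Fourier transform of a tempered distribution: `⟨û, φ⟩ = ⟨u, φ̂⟩`. -/
def tdFourier (m : ℕ) (u : TD m) : TD m :=
  u.comp (SchwartzMap.fourierTransformCLM ℝ)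

/-- The tempered distribution `u` is represented by the locally integrable function `g`,
in the sense that `⟨u, φ⟩ = ∫ g·φ` for every Schwartz function `φ`. -/
def Represents (m : ℕ) (g : Euc m → ℂ) (u : TD m) : Prop :=
  MeasureTheory.LocallyIntegrable g volume ∧
    ∀ φ : SchwartzMap (Euc m) ℂ, u φ = ∫ x, g x * φ x

/-- Membership of a tempered distribution `u` in the Sobolev space `H^s(ℝ^m)`:
the Fourier transform of `u` is represented by a locally integrable function `g` with
`∫ (1+|ξ|²)^s |g ξ|² dξ < ∞`. -/
def MemHs (m : ℕ) (s : ℝ) (u : TD m) : Prop :=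
  ∃ g : Euc m → ℂ, Represents m g (tdFourier m u) ∧
    MeasureTheory.Integrable (fun ξ : Euc m => (1 + ‖ξ‖ ^ 2) ^ s * ‖g ξ‖ ^ 2) volume

/-- The Sobolev norm `‖u‖_{H^s(ℝ^m)}` (defined to be `0` if `u ∉ H^s`). -/
def sobNorm (m : ℕ) (s : ℝ) (u : TD m) : ℝ :=
  if h : MemHs m s u then
    Real.sqrt (∫ ξ : Euc m, (1 + ‖ξ‖ ^ 2) ^ s * ‖h.choose ξ‖ ^ 2)
  else 0

/-- The `H^s(ℝ^m)` inner product (defined to be `0` if either argument is not in `H^s`). -/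
def sobInner (m : ℕ) (s : ℝ) (u v : TD m) : ℂ :=
  if hu : MemHs m s u then
    if hv : MemHs m s v then
      ∫ ξ : Euc m, (((1 + ‖ξ‖ ^ 2) ^ s : ℝ) : ℂ) * (hu.choose ξ * starRingEnd ℂ (hv.choose ξ))
    else 0
  else 0

/-- The duality pairing `⟨u, v⟩` between `u ∈ H^{-s}(ℝ^m)` and `v ∈ H^s(ℝ^m)`:
`⟨u,v⟩ = ∫ û(ξ) conj(v̂(ξ)) dξ`. -/
def sobPair (m : ℕ) (s : ℝ) (u v : TD m) : ℂ :=
  if hu : MemHs m (-s) u then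
    if hv : MemHs m s v then
      ∫ ξ : Euc m, hu.choose ξ * starRingEnd ℂ (hv.choose ξ)
    else 0
  else 0

/-- The support of a tempered distribution: `x` lies in the support iff `u` does not
vanish on any open neighbourhood of `x`. -/
def tdSupport (m : ℕ) (u : TD m) : Set (Euc m) :=
  {x | ∀ U : Set (Euc m), IsOpen U → x ∈ U →
    ∃ φ : SchwartzMap (Euc m) ℂ, tsupport (⇑φ) ⊆ U ∧ u φ ≠ 0}

/-- `H^s_F`: the elements of `H^s(ℝ^m)` with support contained in `F`. -/
def HsOn (m : ℕ) (s : ℝ) (F : Set (Euc m)) : Set (TD m) :=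
  {u | MemHs m s u ∧ tdSupport m u ⊆ F}

/-- A set `E ⊂ ℝ^m` is `s`-null if the only `u ∈ H^s(ℝ^m)` supported in `E` is `0`. -/
def IsNull (m : ℕ) (s : ℝ) (E : Set (Euc m)) : Prop :=
  ∀ u : TD m, MemHs m s u → tdSupport m u ⊆ E → u = 0

/-- `u` is the tempered distribution of a smooth function with compact support contained
in `Ω`. -/
def IsTestFunOn (m : ℕ) (Ω : Set (Euc m)) (u : TD m) : Prop :=
  ∃ f : Euc m → ℂ, ContDiff ℝ (⊤ : ℕ∞) f ∧ HasCompactSupport f ∧ tsupport f ⊆ Ω ∧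
    ∀ φ : SchwartzMap (Euc m) ℂ, u φ = ∫ x, f x * φ x

/-- `\widetilde{H}^s(Ω)`: the closure in `H^s(ℝ^m)` of the smooth functions with compact
support contained in `Ω`. -/
def tildeHs (m : ℕ) (s : ℝ) (Ω : Set (Euc m)) : Set (TD m) :=
  {u | MemHs m s u ∧ ∀ ε > 0, ∃ v : TD m, IsTestFunOn m Ω v ∧ sobNorm m s (u - v) < ε}

/-- `V` is a closed (linear) subspace of `H^s(ℝ^m)`. -/
def IsClosedSubspace (m : ℕ) (s : ℝ) (V : Set (TD m)) : Prop :=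
  (∀ u ∈ V, MemHs m s u) ∧ (0 : TD m) ∈ V ∧
  (∀ u ∈ V, ∀ v ∈ V, u + v ∈ V) ∧ (∀ (c : ℂ), ∀ u ∈ V, c • u ∈ V) ∧
  (∀ u : TD m, MemHs m s u → (∀ ε > 0, ∃ v ∈ V, sobNorm m s (u - v) < ε) → u ∈ V)

/-- The annihilator `V^a ⊂ H^{-s}(ℝ^m)` of a subspace `V ⊂ H^s(ℝ^m)` with respect to the
duality pairing. -/
def annihilatorOf (m : ℕ) (s : ℝ) (V : Set (TD m)) : Set (TD m) :=
  {a : TD m | MemHs m (-s) a ∧ ∀ v ∈ V, sobPair m s a v = 0}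

/-- `V* := (V^a)^⊥`, the orthogonal complement in `H^{-s}(ℝ^m)` of the annihilator of `V`. -/
def dualSpaceOf (m : ℕ) (s : ℝ) (V : Set (TD m)) : Set (TD m) :=
  {u : TD m | MemHs m (-s) u ∧ ∀ a ∈ annihilatorOf m s V, sobInner m (-s) u a = 0}

/-- Multiplication of a tempered distribution by a smooth function of temperate growth. -/
def smulTD (m : ℕ) (χ : Euc m → ℂ) (hχ : Function.HasTemperateGrowth χ) (u : TD m) : TD m :=
  u.comp (SchwartzMap.bilinLeftCLM (ContinuousLinearMap.mul ℝ ℂ) hχ)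


open Real
open scoped FourierTransform RealInnerProductSpace ContDiff Manifold

namespace NullHalfAux

/-- compactly supported smooth functions are Schwartz -/
def toSchwartz {m : ℕ} (f : Euc m → ℂ) (hf : ContDiff ℝ ∞ f) (h2 : HasCompactSupport f) :
    SchwartzMap (Euc m) ℂ where
  toFun := f
  smooth' := hf
  decay' := by
    intro k n
    have h3 : HasCompactSupport (fun x => ‖x‖ ^ k * ‖iteratedFDeriv ℝ n f x‖) := by
      apply HasCompactSupport.mul_left
      exact (h2.iteratedFDeriv n).norm
    have h4 : Continuous (fun x : Euc m => ‖x‖ ^ k * ‖iteratedFDeriv ℝ n f x‖) := by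
      exact ((continuous_norm.pow k)).mul
        ((hf.continuous_iteratedFDeriv (by exact_mod_cast le_top)).norm)
    rcases h4.bounded_above_of_compact_support h3 with ⟨C, hC⟩
    refine ⟨C, fun x => ?_⟩
    have := hC x
    rw [Real.norm_eq_abs] at this
    exact (le_abs_self _).trans this

@[simp] lemma toSchwartz_apply {m : ℕ} (f : Euc m → ℂ) (hf : ContDiff ℝ ∞ f)
    (h2 : HasCompactSupport f) (x : Euc m) : toSchwartz f hf h2 x = f x := rfl

lemma conj_fourierIntegralInv {m : ℕ} (ψ : Euc m → ℂ) (x : Euc m) :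
    (𝓕 (fun v => starRingEnd ℂ (ψ v)) : Euc m → ℂ) x
      = starRingEnd ℂ ((𝓕⁻ ψ : Euc m → ℂ) x) := by
  rw [Real.fourierInv_eq, Real.fourier_eq, ← integral_conj]
  congr 1
  ext v
  rw [Circle.smul_def, Circle.smul_def, smul_eq_mul, smul_eq_mul, map_mul,
    Real.fourierChar_apply, Real.fourierChar_apply, ← Complex.exp_conj]
  congr 2
  simp only [map_mul, Complex.conj_ofReal, Complex.conj_I]
  push_cast
  ring

lemma parseval {m : ℕ} (ϕ : SchwartzMap (Euc m) ℂ) :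
    ∫ ξ, ‖(fourierTransformCLM ℝ ϕ) ξ‖ ^ 2 = ∫ x, ‖ϕ x‖ ^ 2 := by
  have h1 : Integrable (⇑ϕ) volume := ϕ.integrable
  set ψ := fourierTransformCLM ℝ ϕ with hψ
  have hψf : ⇑ψ = 𝓕 ⇑ϕ := by rw [hψ]; exact rfl
  have hψi : Integrable (⇑ψ) volume := ψ.integrable
  have hconj : Integrable (fun ξ => starRingEnd ℂ (ψ ξ)) volume :=
    ((Complex.conjCLE : ℂ ≃L[ℝ] ℂ).toContinuousLinearMap).integrable_comp hψi
  have hflip : (innerₗ (Euc m)).flip = innerₗ (Euc m) := by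
    apply LinearMap.ext; intro x; apply LinearMap.ext; intro y
    rw [LinearMap.flip_apply, innerₗ_apply_apply, innerₗ_apply_apply]
    exact real_inner_comm x y
  have key := VectorFourier.integral_bilin_fourierIntegral_eq_flip
    (μ := (volume : Measure (Euc m))) (ν := (volume : Measure (Euc m)))
    (L := innerₗ (Euc m)) (f := ⇑ϕ) (g := fun ξ => starRingEnd ℂ (ψ ξ))
    (ContinuousLinearMap.mul ℂ ℂ) Real.continuous_fourierChar
    (by exact continuous_inner) h1 hconj
  rw [hflip] at key
  have lhs_eq : ∀ ξ, VectorFourier.fourierIntegral 𝐞 volume (innerₗ (Euc m)) (⇑ϕ) ξ = ψ ξ := by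
    intro ξ; rw [hψf]; rfl
  have hinv : 𝓕⁻ (𝓕 ⇑ϕ) = ⇑ϕ :=
    Continuous.fourierInv_fourier_eq ϕ.continuous h1 (by rw [← hψf]; exact hψi)
  have rhs_eq : ∀ x, VectorFourier.fourierIntegral 𝐞 volume (innerₗ (Euc m))
      (fun ξ => starRingEnd ℂ (ψ ξ)) x = starRingEnd ℂ (ϕ x) := by
    intro x
    have : VectorFourier.fourierIntegral 𝐞 volume (innerₗ (Euc m))
        (fun ξ => starRingEnd ℂ (ψ ξ)) x
        = (𝓕 (fun ξ => starRingEnd ℂ (ψ ξ)) : Euc m → ℂ) x := rfl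
    rw [this, conj_fourierIntegralInv, hψf, hinv]
  simp_rw [ContinuousLinearMap.mul_apply', lhs_eq, rhs_eq] at key
  have e1 : ∀ z : ℂ, z * starRingEnd ℂ z = ((‖z‖ ^ 2 : ℝ) : ℂ) := by
    intro z; rw [Complex.mul_conj']; push_cast; ring
  simp_rw [e1] at key
  have c1 : ∀ f : Euc m → ℝ, ∫ x, ((f x : ℝ) : ℂ) = ((∫ x, f x : ℝ) : ℂ) := by
    intro f
    exact integral_ofReal
  rw [c1, c1] at key
  exact_mod_cast key

lemma amgm_pt (t a b : ℝ) (ht : 0 < t) :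
    a * b ≤ (t * a ^ 2 + t⁻¹ * b ^ 2) / 2 := by
  have h := sq_nonneg (t * a - b)
  have ht' : 0 < t⁻¹ := inv_pos.2 ht
  rw [le_div_iff₀ (by norm_num : (0:ℝ) < 2)]
  have : t⁻¹ * t = 1 := inv_mul_cancel₀ ht.ne'
  nlinarith [sq_nonneg (t * a - b), mul_nonneg (mul_nonneg ht'.le h) ht.le]

lemma cs_integral {α : Type*} [MeasurableSpace α] {μ : Measure α} (g w : α → ℝ)
    (hgw : Integrable (fun x => g x * w x) μ)
    (hg2 : Integrable (fun x => g x ^ 2) μ) (hw2 : Integrable (fun x => w x ^ 2) μ) :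
    ∫ x, g x * w x ∂μ ≤ Real.sqrt (∫ x, g x ^ 2 ∂μ) * Real.sqrt (∫ x, w x ^ 2 ∂μ) := by
  set A := Real.sqrt (∫ x, g x ^ 2 ∂μ) with hA
  set B := Real.sqrt (∫ x, w x ^ 2 ∂μ) with hB
  have hA0 : 0 ≤ A := Real.sqrt_nonneg _
  have hB0 : 0 ≤ B := Real.sqrt_nonneg _
  have hAsq : A ^ 2 = ∫ x, g x ^ 2 ∂μ := Real.sq_sqrt (integral_nonneg (fun x => sq_nonneg _))
  have hBsq : B ^ 2 = ∫ x, w x ^ 2 ∂μ := Real.sq_sqrt (integral_nonneg (fun x => sq_nonneg _))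
  apply le_of_forall_pos_le_add
  intro ε hε
  set δ := min 1 (ε / (A + B + 1)) with hδ
  have hδ0 : 0 < δ := lt_min one_pos (div_pos hε (by linarith))
  set t := (B + δ) / (A + δ) with ht
  have ht0 : 0 < t := div_pos (by linarith) (by linarith)
  have step : ∫ x, g x * w x ∂μ ≤ (t * ∫ x, g x ^ 2 ∂μ + t⁻¹ * ∫ x, w x ^ 2 ∂μ) / 2 := by
    rw [← integral_const_mul, ← integral_const_mul, ← integral_add (hg2.const_mul t)
      (hw2.const_mul t⁻¹), ← integral_div]
    exact integral_mono hgw (((hg2.const_mul t).add (hw2.const_mul t⁻¹)).div_const 2)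
      (fun x => amgm_pt t (g x) (w x) ht0)
  have hstep2 : (t * ∫ x, g x ^ 2 ∂μ + t⁻¹ * ∫ x, w x ^ 2 ∂μ) / 2 ≤ (A + δ) * (B + δ) := by
    rw [← hAsq, ← hBsq]
    have h1 : t * A ^ 2 ≤ t * (A + δ) ^ 2 := by
      apply mul_le_mul_of_nonneg_left _ ht0.le
      nlinarith
    have h2 : t⁻¹ * B ^ 2 ≤ t⁻¹ * (B + δ) ^ 2 := by
      apply mul_le_mul_of_nonneg_left _ (inv_pos.2 ht0).le
      nlinarith
    have e1 : t * (A + δ) ^ 2 = (B + δ) * (A + δ) := by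
      rw [ht]; field_simp
    have e2 : t⁻¹ * (B + δ) ^ 2 = (A + δ) * (B + δ) := by
      rw [ht, inv_div]; field_simp
    rw [e1] at h1; rw [e2] at h2
    linarith
  have hfin : (A + δ) * (B + δ) ≤ A * B + ε := by
    have hδ1 : δ ≤ 1 := min_le_left _ _
    have hδ2 : δ ≤ ε / (A + B + 1) := min_le_right _ _
    have h3 : δ * (A + B + 1) ≤ ε := by
      rw [← le_div_iff₀ (by linarith : (0:ℝ) < A + B + 1)]
      exact hδ2
    nlinarith
  linarith

lemma schwartz_normsq_integrable {m : ℕ} (ϕ : SchwartzMap (Euc m) ℂ) :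
    Integrable (fun x => ‖ϕ x‖ ^ 2) volume := by
  obtain ⟨C, hC⟩ := ϕ.decay' 0 0
  have hC' : ∀ x, ‖ϕ x‖ ≤ C := by
    intro x
    have := hC x
    have h' : ‖ϕ.toFun x‖ ≤ C := by simpa [norm_iteratedFDeriv_zero] using this
    exact h'
  apply (ϕ.integrable.norm.const_mul C).mono'
  · have : AEStronglyMeasurable (fun x => ‖ϕ x‖ * ‖ϕ x‖) volume :=
      (ϕ.continuous.norm.mul ϕ.continuous.norm).aestronglyMeasurable
    apply this.congr
    filter_upwards with x
    ring
  · filter_upwards with x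
    have h1 : (0:ℝ) ≤ ‖ϕ x‖ := norm_nonneg _
    have h2 := hC' x
    rw [Real.norm_eq_abs, _root_.abs_of_nonneg (by positivity)]
    nlinarith

lemma one_le_weight {s : ℝ} (hs : 0 ≤ s) (ξ : ℝ) : (1:ℝ) ≤ (1 + ξ ^ 2) ^ s :=
  Real.one_le_rpow (by nlinarith [sq_nonneg ξ]) hs

lemma memHs_mono {m : ℕ} {s t : ℝ} {u : TD m} (hu : MemHs m s u) (hts : t ≤ s) : MemHs m t u := by
  obtain ⟨g, hrep, hint⟩ := hu
  refine ⟨g, hrep, ?_⟩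
  have hgm : AEStronglyMeasurable g volume := hrep.1.aestronglyMeasurable
  apply hint.mono'
  · apply AEStronglyMeasurable.mul
    · exact (Continuous.aestronglyMeasurable (by
        apply Continuous.rpow_const (by continuity)
        intro ξ
        left
        positivity))
    · have : AEStronglyMeasurable (fun ξ => ‖g ξ‖ * ‖g ξ‖) volume := hgm.norm.mul hgm.norm
      apply this.congr
      filter_upwards with x
      ring
  · filter_upwards with ξ
    have hb : (0:ℝ) < 1 + ‖ξ‖ ^ 2 := by positivity
    have h1 : (1 + ‖ξ‖ ^ 2) ^ t ≤ (1 + ‖ξ‖ ^ 2) ^ s :=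
      Real.rpow_le_rpow_of_exponent_le (by nlinarith [sq_nonneg ‖ξ‖]) hts
    have h2 : (0:ℝ) ≤ (1 + ‖ξ‖ ^ 2) ^ t := (Real.rpow_pos_of_pos hb t).le
    rw [Real.norm_eq_abs, _root_.abs_of_nonneg (by positivity)]
    have h3 : (0:ℝ) ≤ ‖g ξ‖ ^ 2 := by positivity
    exact mul_le_mul_of_nonneg_right h1 h3

lemma eval_bound {m : ℕ} {s : ℝ} (hs : 0 ≤ s) {u : TD m} (hu : MemHs m s u) :
    ∃ C : ℝ, 0 ≤ C ∧ ∀ ψ : SchwartzMap (Euc m) ℂ,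
      ‖u ψ‖ ≤ C * Real.sqrt (∫ x, ‖ψ x‖ ^ 2) := by
  obtain ⟨g, ⟨hloc, hrep⟩, hint⟩ := hu
  have hgm : AEStronglyMeasurable g volume := hloc.aestronglyMeasurable
  have hg2 : Integrable (fun ξ => ‖g ξ‖ ^ 2) volume := by
    apply hint.mono'
    · have : AEStronglyMeasurable (fun ξ => ‖g ξ‖ * ‖g ξ‖) volume := hgm.norm.mul hgm.norm
      apply this.congr
      filter_upwards with x
      ring
    · filter_upwards with ξ
      rw [Real.norm_eq_abs, _root_.abs_of_nonneg (by positivity)]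
      exact le_mul_of_one_le_left (by positivity) (one_le_weight hs ‖ξ‖)
  refine ⟨Real.sqrt (∫ ξ, ‖g ξ‖ ^ 2), Real.sqrt_nonneg _, fun ψ => ?_⟩
  set ϕ := (fourierTransformCLE ℝ (E := SchwartzMap (Euc m) ℂ) (F := SchwartzMap (Euc m) ℂ)).symm ψ with hϕ
  have hϕψ : fourierTransformCLM ℝ ϕ = ψ := by
    have h := (fourierTransformCLE ℝ (E := SchwartzMap (Euc m) ℂ) (F := SchwartzMap (Euc m) ℂ)).apply_symm_apply ψ
    exact h
  have h1 : u ψ = ∫ ξ, g ξ * ϕ ξ := by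
    rw [← hϕψ]
    exact hrep ϕ
  have hmul : Integrable (fun ξ => ‖g ξ‖ * ‖ϕ ξ‖) volume := by
    apply (((hg2.add (schwartz_normsq_integrable ϕ))).div_const 2).mono'
    · exact (hgm.norm.mul ϕ.continuous.norm.aestronglyMeasurable)
    · filter_upwards with ξ
      rw [Real.norm_eq_abs, _root_.abs_of_nonneg (by positivity)]
      have := amgm_pt 1 ‖g ξ‖ ‖ϕ ξ‖ one_pos
      simpa using this
  have h2 : ‖u ψ‖ ≤ ∫ ξ, ‖g ξ‖ * ‖ϕ ξ‖ := by
    rw [h1]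
    refine (norm_integral_le_integral_norm _).trans (le_of_eq ?_)
    congr 1
    ext ξ
    exact norm_mul _ _
  have h3 := cs_integral (fun ξ => ‖g ξ‖) (fun ξ => ‖ϕ ξ‖) hmul hg2
    (schwartz_normsq_integrable ϕ)
  have h4 : ∫ x, ‖ϕ x‖ ^ 2 = ∫ x, ‖ψ x‖ ^ 2 := by
    have := parseval ϕ
    rw [hϕψ] at this
    exact this.symm
  rw [h4] at h3
  exact h2.trans h3

end NullHalfAux

namespace NullHalfAux

lemma not_mem_tdSupport {m : ℕ} {u : TD m} {x : Euc m} (hx : x ∉ tdSupport m u) :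
    ∃ U : Set (Euc m), IsOpen U ∧ x ∈ U ∧
      ∀ φ : SchwartzMap (Euc m) ℂ, tsupport (⇑φ) ⊆ U → u φ = 0 := by
  simp only [tdSupport, Set.mem_setOf_eq] at hx
  push_neg at hx
  obtain ⟨U, hUo, hxU, hkill⟩ := hx
  exact ⟨U, hUo, hxU, hkill⟩

lemma isClosed_tdSupport (m : ℕ) (u : TD m) : IsClosed (tdSupport m u) := by
  rw [← isOpen_compl_iff]
  rw [isOpen_iff_forall_mem_open]
  intro x hx
  obtain ⟨U, hUo, hxU, hkill⟩ := not_mem_tdSupport hx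
  refine ⟨U, fun y hy hmem => ?_, hUo, hxU⟩
  obtain ⟨φ, hφU, hφne⟩ := hmem U hUo hy
  exact hφne (hkill φ hφU)

lemma vanish_away {m : ℕ} (u : TD m) (ψ : SchwartzMap (Euc m) ℂ)
    (hcs : HasCompactSupport (⇑ψ)) (hdisj : Disjoint (tsupport (⇑ψ)) (tdSupport m u)) :
    u ψ = 0 := by
  classical
  set K := tsupport (⇑ψ) with hK
  have hKc : IsCompact K := hcs
  have hUx : ∀ x : K, ∃ U : Set (Euc m), IsOpen U ∧ (x : Euc m) ∈ U ∧
      ∀ φ : SchwartzMap (Euc m) ℂ, tsupport (⇑φ) ⊆ U → u φ = 0 := by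
    intro x
    exact not_mem_tdSupport (fun hmem => Set.disjoint_left.mp hdisj x.2 hmem)
  choose U hUo hUmem hUkill using hUx
  have hcover : K ⊆ ⋃ i : K, U i := fun x hx => Set.mem_iUnion.2 ⟨⟨x, hx⟩, hUmem ⟨x, hx⟩⟩
  obtain ⟨ρ, hρ⟩ := SmoothPartitionOfUnity.exists_isSubordinate (I := 𝓘(ℝ, Euc m))
    (isClosed_tsupport (⇑ψ)) U hUo hcover
  have hfin : {i : K | (Function.support (⇑(ρ i)) ∩ K).Nonempty}.Finite :=
    ρ.locallyFinite.finite_nonempty_inter_compact hKc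
  set F : Finset K := hfin.toFinset with hF
  -- the pieces
  have hsm : ∀ i : K, ContDiff ℝ ∞ (fun x => ((ρ i x : ℝ) : ℂ) * ψ x) := by
    intro i
    have h1 : ContDiff ℝ ∞ (⇑(ρ i)) := by
      have := (ρ i).contMDiff
      rw [contMDiff_iff_contDiff] at this
      exact this
    exact (Complex.ofRealCLM.contDiff.comp h1).mul ψ.smooth'
  have hcsup : ∀ i : K, HasCompactSupport (fun x => ((ρ i x : ℝ) : ℂ) * ψ x) := by
    intro i
    apply HasCompactSupport.intro hKc
    intro x hx
    have : ψ x = 0 := image_eq_zero_of_notMem_tsupport hx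
    simp [this]
  set Ψ : K → SchwartzMap (Euc m) ℂ := fun i => toSchwartz _ (hsm i) (hcsup i) with hΨ
  have hkill : ∀ i : K, u (Ψ i) = 0 := by
    intro i
    apply hUkill i
    have hsub : Function.support (⇑(Ψ i)) ⊆ tsupport (⇑(ρ i)) := by
      intro x hx
      have : ρ i x ≠ 0 := by
        intro h0
        apply hx
        show ((ρ i x : ℝ) : ℂ) * ψ x = 0
        simp [h0]
      exact subset_tsupport _ this
    have : tsupport (⇑(Ψ i)) ⊆ tsupport (⇑(ρ i)) :=
      closure_minimal hsub (isClosed_tsupport _)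
    exact this.trans (hρ i)
  have hsum : ψ = ∑ i ∈ F, Ψ i := by
    apply SchwartzMap.ext
    intro x
    have hcoe : (∑ i ∈ F, Ψ i) x = ∑ i ∈ F, (Ψ i) x := by
      calc (∑ i ∈ F, Ψ i) x = (FunLike.coeAddMonoidHom (SchwartzMap (Euc m) ℂ) (Euc m) ℂ (∑ i ∈ F, Ψ i)) x := rfl
      _ = (∑ i ∈ F, (fun j => FunLike.coeAddMonoidHom (SchwartzMap (Euc m) ℂ) (Euc m) ℂ (Ψ j)) i) x := by
            rw [map_sum]
      _ = ∑ i ∈ F, (Ψ i) x := by rw [Finset.sum_apply]; rfl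
    rw [hcoe]
    by_cases hx : x ∈ K
    · have hsupsub : Function.support (fun i : K => ρ i x) ⊆ ↑F := by
        intro i hi
        rw [hF, Finset.mem_coe, Set.Finite.mem_toFinset]
        exact ⟨x, hi, hx⟩
      have h1 : ∑ i ∈ F, ρ i x = 1 := by
        rw [← finsum_eq_sum_of_support_subset _ hsupsub]
        exact ρ.sum_eq_one hx
      have : ∑ i ∈ F, (Ψ i) x = (∑ i ∈ F, ((ρ i x : ℝ) : ℂ)) * ψ x := by
        rw [Finset.sum_mul]
        rfl
      rw [this, ← Complex.ofReal_sum, h1]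
      simp
    · have hψ0 : ψ x = 0 := image_eq_zero_of_notMem_tsupport hx
      rw [hψ0]
      symm
      apply Finset.sum_eq_zero
      intro i _
      show ((ρ i x : ℝ) : ℂ) * ψ x = 0
      rw [hψ0, mul_zero]
  calc u ψ = u (∑ i ∈ F, Ψ i) := by rw [← hsum]
  _ = ∑ i ∈ F, u (Ψ i) := map_sum u Ψ F
  _ = 0 := Finset.sum_eq_zero (fun i _ => hkill i)

end NullHalfAux

namespace NullHalfAux

set_option maxHeartbeats 2000000 in
lemma null_of_measure_zero {m : ℕ} {s : ℝ} (hs : 0 ≤ s) {u : TD m} (hu : MemHs m s u)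
    (hvol : volume (tdSupport m u) = 0) : u = 0 := by
  classical
  obtain ⟨C, hC0, hC⟩ := eval_bound hs hu
  -- Step 1: u vanishes on compactly supported Schwartz functions
  have step1 : ∀ h : SchwartzMap (Euc m) ℂ, HasCompactSupport (⇑h) → u h = 0 := by
    intro h hsupp
    obtain ⟨M, hM⟩ := (h.continuous.norm).bounded_above_of_compact_support hsupp.norm
    set M0 : ℝ := max M 0 with hM0
    have hM0' : ∀ x, ‖h x‖ ≤ M0 := by
      intro x
      have := hM x
      rw [Real.norm_eq_abs, _root_.abs_of_nonneg (norm_nonneg _)] at this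
      exact this.trans (le_max_left _ _)
    have hM00 : 0 ≤ M0 := le_max_right _ _
    have key : ∀ ε : ℝ, 0 < ε → ‖u h‖ ≤ C * M0 * Real.sqrt ε := by
      intro ε hε
      obtain ⟨U, hUsup, hUo, hUvol⟩ := Set.exists_isOpen_lt_of_lt (tdSupport m u)
        (ENNReal.ofReal ε) (by rw [hvol]; exact ENNReal.ofReal_pos.2 hε)
      obtain ⟨V, hVo, hSV, hVU⟩ := normal_exists_closure_subset
        (isClosed_tdSupport m u) hUo hUsup
      obtain ⟨χ, hχsm, hχrange, hχsupp, hχone⟩ :=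
        exists_contMDiff_support_eq_eq_one_iff (n := (⊤ : ℕ∞)) (I := 𝓘(ℝ, Euc m)) hUo isClosed_closure hVU
      rw [contMDiff_iff_contDiff] at hχsm
      have hχ01 : ∀ x, 0 ≤ χ x ∧ χ x ≤ 1 := by
        intro x
        have := hχrange (Set.mem_range_self x)
        exact ⟨this.1, this.2⟩
      -- the two pieces
      have hsm1 : ContDiff ℝ ∞ (fun x => ((1 - χ x : ℝ) : ℂ) * h x) :=
        (Complex.ofRealCLM.contDiff.comp (contDiff_const.sub hχsm)).mul h.smooth'
      have hsm2 : ContDiff ℝ ∞ (fun x => ((χ x : ℝ) : ℂ) * h x) :=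
        (Complex.ofRealCLM.contDiff.comp hχsm).mul h.smooth'
      have hcs1 : HasCompactSupport (fun x => ((1 - χ x : ℝ) : ℂ) * h x) := by
        apply HasCompactSupport.intro hsupp
        intro x hx
        rw [image_eq_zero_of_notMem_tsupport hx, mul_zero]
      have hcs2 : HasCompactSupport (fun x => ((χ x : ℝ) : ℂ) * h x) := by
        apply HasCompactSupport.intro hsupp
        intro x hx
        rw [image_eq_zero_of_notMem_tsupport hx, mul_zero]
      set Ψ₁ := toSchwartz _ hsm1 hcs1 with hΨ₁
      set Ψ₂ := toSchwartz _ hsm2 hcs2 with hΨ₂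
      have hu1 : u Ψ₁ = 0 := by
        refine vanish_away u Ψ₁ hcs1 ?_
        rw [Set.disjoint_left]
        intro x hxsup hxS
        have hxV : x ∈ V := hSV hxS
        have hsub : tsupport (⇑Ψ₁) ⊆ Vᶜ := by
          apply closure_minimal _ (hVo.isClosed_compl)
          intro y hy
          simp only [Set.mem_compl_iff]
          intro hyV
          apply hy
          show ((1 - χ y : ℝ) : ℂ) * h y = 0
          have : χ y = 1 := (hχone y).1 (subset_closure hyV)
          rw [this]
          norm_num
        exact (hsub hxsup) hxV
      have hsplit : h = Ψ₁ + Ψ₂ := by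
        apply SchwartzMap.ext
        intro x
        rw [SchwartzMap.add_apply]
        show h x = ((1 - χ x : ℝ) : ℂ) * h x + ((χ x : ℝ) : ℂ) * h x
        push_cast
        ring
      have huh : u h = u Ψ₂ := by
        rw [hsplit, map_add, hu1, zero_add]
      -- bound the L² norm of Ψ₂
      have hint2 : ∫ x, ‖Ψ₂ x‖ ^ 2 ≤ M0 ^ 2 * (volume U).toReal := by
        have hmono : ∀ x, ‖Ψ₂ x‖ ^ 2 ≤ Set.indicator U (fun _ => M0 ^ 2) x := by
          intro x
          by_cases hxU : x ∈ U
          · rw [Set.indicator_of_mem hxU]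
            show ‖((χ x : ℝ) : ℂ) * h x‖ ^ 2 ≤ M0 ^ 2
            rw [norm_mul]
            have h1 : ‖((χ x : ℝ) : ℂ)‖ ≤ 1 := by
              rw [Complex.norm_real, Real.norm_eq_abs,
                _root_.abs_of_nonneg (hχ01 x).1]
              exact (hχ01 x).2
            have h2 := hM0' x
            have h3 : (0:ℝ) ≤ ‖h x‖ := norm_nonneg _
            have h4 : ‖((χ x : ℝ) : ℂ)‖ * ‖h x‖ ≤ M0 := by
              nlinarith [norm_nonneg (((χ x : ℝ) : ℂ))]
            exact pow_le_pow_left₀ (by positivity) h4 2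
          · rw [Set.indicator_of_notMem hxU]
            have : χ x = 0 := by
              by_contra hne
              exact hxU (hχsupp ▸ hne)
            show ‖((χ x : ℝ) : ℂ) * h x‖ ^ 2 ≤ 0
            rw [this]
            norm_num
        have hind : Integrable (Set.indicator U (fun _ => M0 ^ 2)) volume := by
          rw [integrable_indicator_iff hUo.measurableSet]
          apply (integrableOn_const_iff).2
          right
          exact hUvol.trans_le le_top
        have := integral_mono (schwartz_normsq_integrable Ψ₂) hind hmono
        rw [integral_indicator_const _ hUo.measurableSet, smul_eq_mul, mul_comm] at this
        exact this
      have htoReal : (volume U).toReal ≤ ε :=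
        ENNReal.toReal_le_of_le_ofReal hε.le hUvol.le
      have hsqrt : Real.sqrt (∫ x, ‖Ψ₂ x‖ ^ 2) ≤ M0 * Real.sqrt ε := by
        have h1 : ∫ x, ‖Ψ₂ x‖ ^ 2 ≤ M0 ^ 2 * ε := by
          have : M0 ^ 2 * (volume U).toReal ≤ M0 ^ 2 * ε :=
            mul_le_mul_of_nonneg_left htoReal (by positivity)
          linarith
        calc Real.sqrt (∫ x, ‖Ψ₂ x‖ ^ 2) ≤ Real.sqrt (M0 ^ 2 * ε) := Real.sqrt_le_sqrt h1
        _ = M0 * Real.sqrt ε := by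
            rw [Real.sqrt_mul (by positivity), Real.sqrt_sq hM00]
      calc ‖u h‖ = ‖u Ψ₂‖ := by rw [huh]
      _ ≤ C * Real.sqrt (∫ x, ‖Ψ₂ x‖ ^ 2) := hC Ψ₂
      _ ≤ C * (M0 * Real.sqrt ε) := mul_le_mul_of_nonneg_left hsqrt hC0
      _ = C * M0 * Real.sqrt ε := by ring
    -- conclude
    have hle : ‖u h‖ ≤ 0 := by
      apply le_of_forall_pos_le_add
      intro δ hδ
      have hεpos : (0:ℝ) < (δ / (C * M0 + 1)) ^ 2 := by positivity
      have := key _ hεpos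
      have hsq : Real.sqrt ((δ / (C * M0 + 1)) ^ 2) = δ / (C * M0 + 1) :=
        Real.sqrt_sq (by positivity)
      rw [hsq] at this
      have hCM : 0 ≤ C * M0 := mul_nonneg hC0 hM00
      have h2 : C * M0 * (δ / (C * M0 + 1)) ≤ δ := by
        rw [mul_div_assoc']
        rw [div_le_iff₀ (by linarith)]
        nlinarith
      linarith
    simpa using norm_le_zero_iff.mp hle
  -- Step 2: extend to all Schwartz functions
  apply ContinuousLinearMap.ext
  intro φ
  rw [ContinuousLinearMap.zero_apply]
  set b : ℕ → ContDiffBump (0 : Euc m) := fun k =>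
    ⟨k + 1, k + 2, by positivity, by linarith⟩ with hb
  have hsmk : ∀ k : ℕ, ContDiff ℝ ∞ (fun x => (((b k) x : ℝ) : ℂ) * φ x) := fun k =>
    (Complex.ofRealCLM.contDiff.comp (b k).contDiff).mul φ.smooth'
  have hcsk : ∀ k : ℕ, HasCompactSupport (fun x => (((b k) x : ℝ) : ℂ) * φ x) := by
    intro k
    apply HasCompactSupport.intro ((b k).hasCompactSupport)
    intro x hx
    rw [image_eq_zero_of_notMem_tsupport hx]
    simp
  set Φ : ℕ → SchwartzMap (Euc m) ℂ := fun k => toSchwartz _ (hsmk k) (hcsk k) with hΦ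
  have hΦ0 : ∀ k, u (Φ k) = 0 := by
    intro k
    apply step1
    apply HasCompactSupport.intro ((b k).hasCompactSupport)
    intro x hx
    show (((b k) x : ℝ) : ℂ) * φ x = 0
    rw [image_eq_zero_of_notMem_tsupport hx]
    simp
  set I : ℕ → ℝ := fun k => ∫ x, ‖φ x - (((b k) x : ℝ) : ℂ) * φ x‖ ^ 2 with hI
  have hbound : ∀ k, ‖u φ‖ ≤ C * Real.sqrt (I k) := by
    intro k
    have h1 : u φ = u (φ - Φ k) := by rw [map_sub, hΦ0, sub_zero]
    have h2 := hC (φ - Φ k)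
    have h3 : ∫ x, ‖(φ - Φ k) x‖ ^ 2 = I k := by
      congr 1
    rw [h1]
    rw [h3] at h2
    exact h2
  have hDCT : Tendsto I atTop (nhds 0) := by
    have h0 : (0 : ℝ) = ∫ (_ : Euc m), (0:ℝ) := by rw [integral_zero]
    rw [hI, h0]
    apply tendsto_integral_of_dominated_convergence (fun x => ‖φ x‖ ^ 2)
    · intro k
      apply Continuous.aestronglyMeasurable
      have : Continuous (fun x => φ x - (((b k) x : ℝ) : ℂ) * φ x) :=
        φ.continuous.sub ((Complex.continuous_ofReal.comp (b k).continuous).mul φ.continuous)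
      exact (this.norm.pow 2)
    · exact schwartz_normsq_integrable φ
    · intro k
      filter_upwards with x
      have h01 : 0 ≤ (b k) x := (b k).nonneg
      have h11 : (b k) x ≤ 1 := (b k).le_one
      have : ‖φ x - (((b k) x : ℝ) : ℂ) * φ x‖ = (1 - (b k) x) * ‖φ x‖ := by
        have : φ x - (((b k) x : ℝ) : ℂ) * φ x = ((1 - (b k) x : ℝ) : ℂ) * φ x := by
          push_cast; ring
        rw [this, norm_mul, Complex.norm_real, Real.norm_eq_abs,
          _root_.abs_of_nonneg (by linarith)]
      rw [Real.norm_eq_abs, _root_.abs_of_nonneg (by positivity), this]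
      have h3 : (0:ℝ) ≤ ‖φ x‖ := norm_nonneg _
      have h5 : (1 - (b k) x) * ‖φ x‖ ≤ ‖φ x‖ := by nlinarith
      have h6 : 0 ≤ (1 - (b k) x) * ‖φ x‖ := mul_nonneg (by linarith) h3
      exact pow_le_pow_left₀ h6 h5 2
    · filter_upwards with x
      apply tendsto_const_nhds.congr'
      have hev : ∀ᶠ k : ℕ in atTop, ‖x‖ ≤ (k:ℝ) + 1 := by
        filter_upwards [eventually_ge_atTop ⌈‖x‖⌉₊] with k hk
        calc ‖x‖ ≤ (⌈‖x‖⌉₊ : ℝ) := Nat.le_ceil _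
        _ ≤ (k : ℝ) := by exact_mod_cast hk
        _ ≤ (k : ℝ) + 1 := by linarith
      filter_upwards [hev] with k hk
      have : (b k) x = 1 := (b k).one_of_mem_closedBall (by
        simpa [Metric.mem_closedBall, dist_zero_right] using hk)
      rw [this]
      norm_num
  have hlim : Tendsto (fun k => C * Real.sqrt (I k)) atTop (nhds 0) := by
    have h1 : Tendsto (fun k => Real.sqrt (I k)) atTop (nhds (Real.sqrt 0)) :=
      (Real.continuous_sqrt.continuousAt.tendsto).comp hDCT
    rw [Real.sqrt_zero] at h1
    have := h1.const_mul C
    simpa using this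
  have : ‖u φ‖ ≤ 0 := ge_of_tendsto' hlim hbound
  simpa using norm_le_zero_iff.mp this

end NullHalfAux


/-- Let `n ∈ {2,3}` and let `E` be a Borel subset of `ℝ^{n-1}`. If `E` has `(n-1)`-dimensional
Lebesgue measure zero, or if `E` is `(-1/2)`-null, then `E` is `1/2`-null. -/
theorem null_half_of_measure_zero_or_null_neg_half
    (n : ℕ) (hn : n = 2 ∨ n = 3) (E : Set (Euc (n - 1))) (hE : MeasurableSet E)
    (h : volume E = 0 ∨ IsNull (n - 1) (-(1/2)) E) :
    IsNull (n - 1) (1/2) E := by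
  intro u hu hsub
  rcases h with h0 | hnull
  · exact NullHalfAux.null_of_measure_zero (by norm_num) hu (measure_mono_null hsub h0)
  · exact hnull u (NullHalfAux.memHs_mono hu (by norm_num)) hsub
end
end
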